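/- The set of idempotents of the inverse semigroup S_X equals E_X = {E(F;v) : v ∈ A*, F ⊆ A* finite} ∪ {0}. -/

import Mathlib

open Function

/-- The one-sided shift map on `ℕ → A`. -/
def shft {A : Type*} (x : ℕ → A) : ℕ → A := fun n => x (n + 1)

/-- Concatenation of a finite word `w` with an infinite word `x`. -/
def wcat {A : Type*} (w : List A) (x : ℕ → A) : ℕ → A :=
  fun n => w.getD n (x (n - w.length))

/-- Partial bijections on `ℕ → A` modelled as relations (sets of pairs (input, output)). -/
abbrev PB (A : Type*) := Set ((ℕ → A) × (ℕ → A))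

/-- Composition on the largest possible domain: `rcomp r s` applies `s` first, then `r`
(i.e. the semigroup product `r · s`). -/
def rcomp {A : Type*} (r s : PB A) : PB A := {p | ∃ y, (p.1, y) ∈ s ∧ (y, p.2) ∈ r}

/-- Inverse of a partial bijection. -/
def rinv {A : Type*} (r : PB A) : PB A := {p | (p.2, p.1) ∈ r}

/-- The identity map on a subset `U`. -/
def idOn {A : Type*} (U : Set (ℕ → A)) : PB A := {p | p.1 ∈ U ∧ p.2 = p.1}

/-- The partial bijection `s_μ : x ↦ μx` on `{x ∈ X : μx ∈ X}`. -/
def sMap {A : Type*} (X : Set (ℕ → A)) (μ : List A) : PB A :=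
  {p | p.1 ∈ X ∧ wcat μ p.1 ∈ X ∧ p.2 = wcat μ p.1}

/-- The cylinder set `C(v) = {vx : x ∈ A^ℕ} ∩ X`. -/
def Cyl {A : Type*} (X : Set (ℕ → A)) (v : List A) : Set (ℕ → A) :=
  {y | y ∈ X ∧ ∃ x, y = wcat v x}

/-- `C(μ,ν) = {νx ∈ X : μx ∈ X}`. -/
def Cmn {A : Type*} (X : Set (ℕ → A)) (μ ν : List A) : Set (ℕ → A) :=
  {y | ∃ x, y = wcat ν x ∧ y ∈ X ∧ wcat μ x ∈ X}

/-- `C(F;v) = {vx ∈ X : fx ∈ X for all f ∈ F}`. -/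
def CFv {A : Type*} (X : Set (ℕ → A)) (F : Finset (List A)) (v : List A) : Set (ℕ → A) :=
  {y | ∃ x, y = wcat v x ∧ y ∈ X ∧ ∀ f ∈ F, wcat f x ∈ X}

/-- The idempotent `E(F;v) = Id_{C(F;v)}`. -/
def Efv {A : Type*} (X : Set (ℕ → A)) (F : Finset (List A)) (v : List A) : PB A :=
  idOn (CFv X F v)

/-- The set `E_X = {E(F;v)} ∪ {0}` of idempotents. -/
def EXset {A : Type*} (X : Set (ℕ → A)) : Set (PB A) :=
  {r | r = ∅ ∨ ∃ (F : Finset (List A)) (v : List A), r = Efv X F v}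

/-- The element `s_α E(F;v) s_β^*` of `I(X)`. -/
def elt {A : Type*} (X : Set (ℕ → A)) (α : List A) (F : Finset (List A)) (v β : List A) :
    PB A :=
  rcomp (rcomp (sMap X α) (Efv X F v)) (rinv (sMap X β))

/-- The inverse semigroup `S_X = {s_α E(F;v) s_β^*} ∪ {0}` (closed form). -/
def SXset {A : Type*} (X : Set (ℕ → A)) : Set (PB A) :=
  {r | r = ∅ ∨ ∃ (α β v : List A) (F : Finset (List A)), r = elt X α F v β}

/-- `α` and `β` are in lowest terms: they do not both end with the same letter. -/
def LowTerms {A : Type*} (α β : List A) : Prop :=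
  ∀ a : A, ¬(α.getLast? = some a ∧ β.getLast? = some a)

/-- A word viewed as an element of the free group on `A`. -/
def wgrp {A : Type*} (w : List A) : FreeGroup A := (w.map FreeGroup.of).prod

/-- Natural partial order on partial bijections: `s ≤ t` iff `t s^* s = s`. -/
def rle {A : Type*} (s t : PB A) : Prop := rcomp t (rcomp (rinv s) s) = s

/-- `P_k(x) = {μ ∈ A^k : μx ∈ X}`. -/
def Pk {A : Type*} (X : Set (ℕ → A)) (k : ℕ) (x : ℕ → A) : Set (List A) :=
  {μ | μ.length = k ∧ wcat μ x ∈ X}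

/-- `l`-past equivalence: `P_r(x) = P_r(y)` for all `r ≤ l`. -/
def pastEq {A : Type*} (X : Set (ℕ → A)) (l : ℕ) (x y : ℕ → A) : Prop :=
  ∀ r ≤ l, Pk X r x = Pk X r y

/-- The relation `x ~_{(k,l)} y`. -/
def klEq {A : Type*} (X : Set (ℕ → A)) (k l : ℕ) (x y : ℕ → A) : Prop :=
  (∀ i < k, x i = y i) ∧ pastEq X l (shft^[k] x) (shft^[k] y)

/-!
Every `s_α E(F;v) s_β^*` is the partial bijection `βvx ↦ αvx`. A partial bijection `r` with
`r r = r` is the identity on its domain: from `z ↦ w` we get `z ↦ y ↦ w`, functionality forces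
`y = w`, and then `w ↦ w` and injectivity force `z = w`. A diagonal `s_α E(F;v) s_β^*` is
`E(F ∪ {v, αv}; βv)`, while conversely `E(F;v) = s_∅ E(F;v) s_∅^*` is idempotent.
-/

section

variable {A : Type*}

lemma wcat_nil (x : ℕ → A) : wcat ([] : List A) x = x := by
  funext n
  simp [wcat]

lemma wcat_append (a b : List A) (x : ℕ → A) : wcat (a ++ b) x = wcat a (wcat b x) := by
  funext n
  simp only [wcat, List.length_append]
  rcases lt_or_ge n a.length with h | h
  · rw [List.getD_append _ _ _ _ h, List.getD_eq_getElem _ _ h, List.getD_eq_getElem _ _ h]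
  · rw [List.getD_append_right _ _ _ _ h, List.getD_eq_default _ _ h,
      show n - (a.length + b.length) = n - a.length - b.length by omega]

lemma wcat_apply_add_length (w : List A) (x : ℕ → A) (n : ℕ) :
    wcat w x (n + w.length) = x n := by
  simp only [wcat]
  rw [List.getD_eq_default _ _ (by omega), Nat.add_sub_cancel]

lemma wcat_right_injective (w : List A) : Injective (wcat w) := fun x x' h => by
  funext n
  simpa only [wcat_apply_add_length] using congrFun h (n + w.length)

lemma rcomp_idOn_self (U : Set (ℕ → A)) : rcomp (idOn U) (idOn U) = idOn U := by
  ext ⟨z, w⟩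
  simp only [rcomp, idOn, Set.mem_ofPred_eq]
  constructor
  · rintro ⟨y, ⟨hz, rfl⟩, -, hw⟩
    exact ⟨hz, hw⟩
  · rintro ⟨hz, hw⟩
    exact ⟨z, ⟨hz, rfl⟩, hz, hw⟩

lemma fst_eq_snd_of_rcomp_self {r : PB A}
    (right_unique : ∀ {z w w'}, (z, w) ∈ r → (z, w') ∈ r → w = w')
    (left_unique : ∀ {z z' w}, (z, w) ∈ r → (z', w) ∈ r → z = z')
    (hr : rcomp r r = r) {z w : ℕ → A} (h : (z, w) ∈ r) : z = w := by
  obtain ⟨y, hzy, hyw⟩ : (z, w) ∈ rcomp r r := by rwa [hr]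
  obtain rfl : y = w := right_unique hzy h
  exact left_unique h hyw

variable (X : Set (ℕ → A)) (α : List A) (F : Finset (List A)) (v β : List A)

lemma mem_elt_iff (z w : ℕ → A) :
    (z, w) ∈ elt X α F v β ↔ ∃ x, wcat v x ∈ X ∧ wcat β (wcat v x) ∈ X ∧
      wcat α (wcat v x) ∈ X ∧ (∀ f ∈ F, wcat f x ∈ X) ∧
      z = wcat β (wcat v x) ∧ w = wcat α (wcat v x) := by
  simp only [elt, rcomp, rinv, sMap, Efv, idOn, CFv, Set.mem_ofPred_eq]
  constructor
  · rintro ⟨y, ⟨hyX, hβy, hz⟩, u, ⟨⟨x, rfl, -, hF⟩, rfl⟩, -, hαu, hw⟩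
    exact ⟨x, hyX, hβy, hαu, hF, hz, hw⟩
  · rintro ⟨x, hv, hβ, hα, hF, hz, hw⟩
    exact ⟨wcat v x, ⟨hv, hβ, hz⟩, wcat v x, ⟨⟨x, rfl, hv, hF⟩, rfl⟩, hv, hα, hw⟩

variable {X α β v F}

lemma elt_right_unique {z w w' : ℕ → A} (h : (z, w) ∈ elt X α F v β)
    (h' : (z, w') ∈ elt X α F v β) : w = w' := by
  obtain ⟨x, -, -, -, -, hz, hw⟩ := (mem_elt_iff X α F v β z w).1 h
  obtain ⟨x', -, -, -, -, hz', hw'⟩ := (mem_elt_iff X α F v β z w').1 h'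
  obtain rfl : x = x' :=
    wcat_right_injective v (wcat_right_injective β (hz.symm.trans hz'))
  rw [hw, hw']

lemma elt_left_unique {z z' w : ℕ → A} (h : (z, w) ∈ elt X α F v β)
    (h' : (z', w) ∈ elt X α F v β) : z = z' := by
  obtain ⟨x, -, -, -, -, hz, hw⟩ := (mem_elt_iff X α F v β z w).1 h
  obtain ⟨x', -, -, -, -, hz', hw'⟩ := (mem_elt_iff X α F v β z' w).1 h'
  obtain rfl : x = x' :=
    wcat_right_injective v (wcat_right_injective α (hw.symm.trans hw'))
  rw [hz, hz']

lemma elt_eq_Efv_of_fst_eq_snd [DecidableEq A]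
    (hdiag : ∀ z w, (z, w) ∈ elt X α F v β → z = w) :
    elt X α F v β = Efv X (insert (α ++ v) (insert v F)) (β ++ v) := by
  ext ⟨z, w⟩
  simp only [Efv, idOn, CFv, Set.mem_ofPred_eq, Finset.forall_mem_insert, wcat_append]
  constructor
  · intro h
    obtain ⟨x, hv, hβ, hα, hF, hz, -⟩ := (mem_elt_iff X α F v β z w).1 h
    exact ⟨⟨x, hz, hz ▸ hβ, hα, hv, hF⟩, (hdiag z w h).symm⟩
  · rintro ⟨⟨x, hw, hwX, hα, hv, hF⟩, rfl⟩
    have h : (w, wcat α (wcat v x)) ∈ elt X α F v β :=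
      (mem_elt_iff X α F v β _ _).2 ⟨x, hv, hw ▸ hwX, hα, hF, hw, rfl⟩
    rwa [← hdiag _ _ h] at h

lemma elt_nil_nil : elt X [] F v [] = Efv X F v := by
  ext ⟨z, w⟩
  rw [mem_elt_iff]
  simp only [Efv, idOn, CFv, Set.mem_ofPred_eq, wcat_nil]
  constructor
  · rintro ⟨x, hv, -, -, hF, rfl, rfl⟩
    exact ⟨⟨x, rfl, hv, hF⟩, rfl⟩
  · rintro ⟨⟨x, rfl, hv, hF⟩, rfl⟩
    exact ⟨x, hv, hv, hv, hF, rfl, rfl⟩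

end

theorem stmt6_general {A : Type*}
    (X : Set (ℕ → A)) :
    {r ∈ SXset X | rcomp r r = r} = EXset X := by
  classical
  ext r
  constructor
  · rintro ⟨rfl | ⟨α, β, v, F, rfl⟩, hr⟩
    · exact Or.inl rfl
    · exact Or.inr ⟨_, _, elt_eq_Efv_of_fst_eq_snd fun _ _ =>
        fst_eq_snd_of_rcomp_self elt_right_unique elt_left_unique hr⟩
  · rintro (rfl | ⟨F, v, rfl⟩)
    · exact ⟨Or.inl rfl, by simp [rcomp]⟩
    · exact ⟨Or.inr ⟨[], [], v, F, elt_nil_nil.symm⟩, rcomp_idOn_self _⟩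

theorem stmt6 {A : Type*} [Fintype A] [TopologicalSpace A] [DiscreteTopology A]
    (X : Set (ℕ → A)) (hXcl : IsClosed X) (hXsh : ∀ x ∈ X, shft x ∈ X) :
    {r ∈ SXset X | rcomp r r = r} = EXset X :=
  stmt6_general X
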